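/- arXiv:1705.06319 — 11 statements merged into one kernel-verified Lean document; each statement's English description precedes it below -/
import Mathlib

section
/- For positive integers P and D, and nonnegative reals γ_1,…,γ_P, the ratio (Σ_{i=1}^P γ_i) / (min_{t∈[1,P]} (Σ_{i=1}^{t-1} γ_i + D·γ_t)) is at least 1 - (1 - 1/D)^P, provided the denominator is positive. -/
/-!
Write `S t = γ 1 + ⋯ + γ t` and `m` for the minimum. Each `t < P` gives
`m ≤ S t + D (S (t+1) - S t)`, that is `m - S (t+1) ≤ (1 - 1/D) (m - S t)`, so the gap
`m - S t` shrinks at least geometrically from `m - S 0 = m`: `m - S P ≤ (1 - 1/D)^P m`.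
-/

theorem mul_one_sub_pow_le_of_le_add_mul_sub {S : ℕ → ℝ} {m d : ℝ} {n : ℕ} (hd : 1 ≤ d)
    (h0 : 0 ≤ S 0) (hstep : ∀ t < n, m ≤ S t + d * (S (t + 1) - S t)) :
    ∀ t ≤ n, m * (1 - (1 - 1 / d) ^ t) ≤ S t := by
  have hd0 : 0 < d := by linarith
  have hq : 0 ≤ 1 - 1 / d := sub_nonneg.2 ((div_le_one hd0).2 hd)
  intro t
  induction t with
  | zero => simpa using h0
  | succ t ih =>
    intro ht
    have hgap : m / d ≤ S t / d + (S (t + 1) - S t) := by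
      rw [div_add' _ _ _ hd0.ne', div_le_div_iff_of_pos_right hd0]
      linarith [hstep t ht]
    calc m * (1 - (1 - 1 / d) ^ (t + 1)) = m * (1 - (1 - 1 / d) ^ t) * (1 - 1 / d) + m / d := by
          ring
      _ ≤ S t * (1 - 1 / d) + m / d := by gcongr; exact ih (by omega)
      _ ≤ S (t + 1) := by linarith [show S t * (1 - 1 / d) = S t - S t / d by ring]

theorem stmt_0_general (P D : ℕ) (hD : 0 < D) (γ : ℕ → ℝ)
    (hne : (Finset.Icc 1 P).Nonempty)
    (hpos : 0 < (Finset.Icc 1 P).inf' hne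
      (fun t => (∑ i ∈ Finset.Icc 1 (t - 1), γ i) + (D : ℝ) * γ t)) :
    (∑ i ∈ Finset.Icc 1 P, γ i) /
      ((Finset.Icc 1 P).inf' hne
        (fun t => (∑ i ∈ Finset.Icc 1 (t - 1), γ i) + (D : ℝ) * γ t))
      ≥ 1 - (1 - 1 / (D : ℝ)) ^ P := by
  set m := (Finset.Icc 1 P).inf' hne
    (fun t => (∑ i ∈ Finset.Icc 1 (t - 1), γ i) + (D : ℝ) * γ t)
  have hstep : ∀ t < P, m ≤ (∑ i ∈ Finset.Icc 1 t, γ i) +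
      D * ((∑ i ∈ Finset.Icc 1 (t + 1), γ i) - ∑ i ∈ Finset.Icc 1 t, γ i) := by
    intro t ht
    rw [Finset.sum_Icc_succ_top (by omega), add_sub_cancel_left]
    exact Finset.inf'_le_of_le _ (Finset.mem_Icc.2 ⟨by omega, ht⟩) le_rfl
  have hbound := mul_one_sub_pow_le_of_le_add_mul_sub (S := fun t => ∑ i ∈ Finset.Icc 1 t, γ i)
    (by exact_mod_cast hD) (by simp) hstep P le_rfl
  rw [ge_iff_le, le_div_iff₀ hpos, mul_comm]
  exact hbound

/-- Wolsey's inequality: for positive integers `P` and `D` and nonnegative reals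
`γ 1, …, γ P`, the ratio of `∑ i in [1..P], γ i` to
`min_{t ∈ [1..P]} (∑ i in [1..t-1], γ i + D * γ t)` is at least `1 - (1 - 1/D)^P`,
provided the denominator (the minimum) is positive. -/
theorem stmt_0 (P D : ℕ) (hP : 0 < P) (hD : 0 < D) (γ : ℕ → ℝ)
    (hγ : ∀ i, 0 ≤ γ i) (hne : (Finset.Icc 1 P).Nonempty)
    (hpos : 0 < (Finset.Icc 1 P).inf' hne
      (fun t => (∑ i ∈ Finset.Icc 1 (t - 1), γ i) + (D : ℝ) * γ t)) :
    (∑ i ∈ Finset.Icc 1 P, γ i) /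
      ((Finset.Icc 1 P).inf' hne
        (fun t => (∑ i ∈ Finset.Icc 1 (t - 1), γ i) + (D : ℝ) * γ t))
      ≥ 1 - (1 - 1 / (D : ℝ)) ^ P :=
  stmt_0_general P D hD γ hne hpos
end

section
/- Let M = (U, F) be a matroid and S, T ∈ F two independent sets. Then there exists a function b : T \ S → (S \ T) ∪ {φ} (where φ is a dummy element, deletion of φ being a no-op) such that for every u ∈ T \ S, (S \ {b(u)}) ∪ {u} ∈ F, and every y ∈ S \ T has at most one preimage under b. -/
/-!
An element `u ∈ T \ S` outside the closure of `S` can be added to `S` as it is, so it is sent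
to `φ`. The remaining elements of `T \ S` are matched injectively, by Hall's theorem, to
partners in the set `N(u)` of those `y ∈ S \ T` with `S - y + u` independent. Hall's condition
comes from fundamental circuits: every `y ≠ u` in the fundamental circuit of `u` in `S` lies in
`S ∩ T` or in `N(u)`, hence `u ∈ cl((S ∩ T) ∪ N(u))`. After contracting `S ∩ T`,
a set `A` of such elements is independent and spanned by `N(A)`, whence `|A| ≤ |N(A)|`.
-/

open Set

lemma exists_injective_of_forall_encard_le {ι α : Type*} {D : Set ι} {t : ι → Set α}
    (ht : ∀ i ∈ D, (t i).Finite)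
    (hall : ∀ A ⊆ D, A.Finite → A.encard ≤ (⋃ i ∈ A, t i).encard) :
    ∃ f : D → α, Function.Injective f ∧ ∀ i : D, f i ∈ t i := by
  classical
  let t' : D → Finset α := fun i => (ht i i.2).toFinset
  have hall' : ∀ s : Finset D, s.card ≤ (s.biUnion t').card := by
    intro s
    have hunion : (⋃ i ∈ Subtype.val '' (s : Set D), t i) = ↑(s.biUnion t') := by
      ext; simp [t']
    have h := hall _ (image_subset_iff.mpr fun i _ => i.2) (s.finite_toSet.image _)
    rwa [hunion, Subtype.val_injective.encard_image, encard_coe_eq_coe_finsetCard,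
      encard_coe_eq_coe_finsetCard, Nat.cast_le] at h
  obtain ⟨f, hf_inj, hf_mem⟩ :=
    (Finset.all_card_le_biUnion_card_iff_exists_injective t').mp hall'
  exact ⟨f, hf_inj, fun i => (ht i i.2).mem_toFinset.mp (hf_mem i)⟩

namespace Matroid

variable {α : Type*} {M : Matroid α} {S T : Set α}

lemma Indep.encard_le_of_subset_closure {I X : Set α} (hI : M.Indep I)
    (hIX : I ⊆ M.closure X) : I.encard ≤ X.encard :=
  (hI.encard_le_eRk_of_subset hIX).trans ((M.eRk_closure_eq X).trans_le (M.eRk_le_encard X))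

def swapPartners (M : Matroid α) (S T : Set α) (u : α) : Set α :=
  {y | y ∈ S \ T ∧ M.Indep (insert u (S \ {y}))}

lemma mem_closure_inter_union_swapPartners {u : α} (hS : M.Indep S) (hucl : u ∈ M.closure S)
    (huS : u ∉ S) : u ∈ M.closure (S ∩ T ∪ M.swapPartners S T u) := by
  have hC := hS.fundCircuit_isCircuit hucl huS
  refine M.closure_subset_closure ?_ (hC.mem_closure_sdiff_singleton_of_mem (M.mem_fundCircuit u S))
  intro y hy
  have hyS : y ∈ S := (M.fundCircuit_sdiff_eq_inter huS ▸ hy).2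
  by_cases hyT : y ∈ T
  · exact Or.inl ⟨hyS, hyT⟩
  have hswap := (hS.mem_fundCircuit_iff hucl huS).mp hy.1
  rw [← insert_sdiff_singleton_comm (Ne.symm hy.2)] at hswap
  exact Or.inr ⟨⟨hyS, hyT⟩, hswap⟩

lemma encard_le_encard_biUnion_swapPartners (hS : M.Indep S) (hT : M.Indep T) {A : Set α}
    (hA : A ⊆ T \ S) (hAcl : A ⊆ M.closure S) :
    A.encard ≤ (⋃ u ∈ A, M.swapPartners S T u).encard := by
  have hST : M.Indep (S ∩ T) := hT.subset inter_subset_right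
  have hdisj : Disjoint A (S ∩ T) :=
    disjoint_left.mpr fun u hu huST => (hA hu).2 huST.1
  refine Indep.encard_le_of_subset_closure (M := M ／ (S ∩ T)) ?_ ?_
  · exact hST.contract_indep_iff.mpr
      ⟨hdisj, hT.subset (union_subset (fun u hu => (hA hu).1) inter_subset_right)⟩
  · intro u hu
    rw [contract_closure_eq, union_comm]
    refine ⟨M.closure_subset_closure (union_subset_union_right _ (subset_biUnion_of_mem hu))
      (mem_closure_inter_union_swapPartners hS (hAcl hu) (hA hu).2), disjoint_left.mp hdisj hu⟩

end Matroid

/-- Swap-mapping lemma for a single matroid: given independent sets `S, T`,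
there is a mapping `b` from `T \ S` to `(S \ T) ∪ {φ}` (the value `none`
playing the role of the dummy element `φ`) such that each swap
`(S \ {b u}) ∪ {u}` is independent and each `y ∈ S \ T` has at most one
preimage. -/
theorem stmt_4 {α : Type*} (M : Matroid α) [M.Finite] (S T : Set α)
    (hS : M.Indep S) (hT : M.Indep T) :
    ∃ b : α → Option α,
      (∀ u ∈ T \ S, ∀ y, b u = some y → y ∈ S \ T) ∧
      (∀ u ∈ T \ S, M.Indep ((S \ ((b u).elim (∅ : Set α) (fun y => {y}))) ∪ {u})) ∧
      (∀ y ∈ S \ T, ∀ u₁ ∈ T \ S, ∀ u₂ ∈ T \ S,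
        b u₁ = some y → b u₂ = some y → u₁ = u₂) := by
  classical
  let D : Set α := {u | u ∈ T \ S ∧ u ∈ M.closure S}
  obtain ⟨f, hf_inj, hf_mem⟩ := exists_injective_of_forall_encard_le (D := D)
    (fun _ _ => (M.set_finite S hS.subset_ground).subset fun _ hy => hy.1.1)
    (fun A hA _ => Matroid.encard_le_encard_biUnion_swapPartners hS hT (fun u hu => (hA hu).1)
      (fun u hu => (hA hu).2))
  refine ⟨fun u => if h : u ∈ D then some (f ⟨u, h⟩) else none, ?_, ?_, ?_⟩
  · intro u _ y hy
    dsimp only at hy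
    split_ifs at hy with h
    exact Option.some_inj.mp hy ▸ (hf_mem ⟨u, h⟩).1
  · intro u hu
    dsimp only
    rw [union_singleton]
    split_ifs with h
    · exact (hf_mem ⟨u, h⟩).2
    · rw [Option.elim_none, sdiff_empty]
      exact (hS.insert_indep_iff_of_notMem hu.2).mpr
        ⟨hT.subset_ground hu.1, fun hcl => h ⟨hu, hcl⟩⟩
  · intro y _ u₁ _ u₂ _ h₁ h₂
    dsimp only at h₁ h₂
    split_ifs at h₁ h₂ with hu₁ hu₂
    exact congrArg Subtype.val (hf_inj (Option.some_inj.mp (h₁.trans h₂.symm)))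
end

section
/- Let M₁,…,M_k be matroids on a common finite ground set U, with F_j the independent sets of M_j, and let S, T ∈ ⋂_{j=1}^k F_j. Then there exists a mapping b : T \ S → {subsets of S \ T of size at most k} such that for each x ∈ T \ S, (S \ b(x)) ∪ {x} ∈ ⋂_{j=1}^k F_j, and each element u ∈ S \ T appears in at most k of the sets b(x). -/
/-!
It suffices to treat one matroid with `#(b x) ≤ 1` and multiplicities `≤ 1`, and then take
`b x` to be the union of the `k` single-matroid maps. For one matroid, an `x ∈ T \ S` with
`S + x` independent gets `b x = ∅`; for any other `x`, `S - u + x` is independent exactly when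
`u` lies in the fundamental circuit of `x` in `S`, so it remains to match these `x` injectively
to such `u ∈ S \ T`. Hall's condition holds: for a set `X` of them, the independent set
`X ∪ (S ∩ T) ⊆ T` is spanned by `S ∩ T` together with the candidates `u` of the elements of
`X`, so `#X + #(S ∩ T)` is at most `#(S ∩ T)` plus the number of these candidates.
-/

open Finset

namespace Matroid

variable {α : Type*} {M : Matroid α}

lemma Indep.encard_le_of_subset_closure_s5 {I J : Set α} (hJ : M.Indep J) (hJI : J ⊆ M.closure I) :
    J.encard ≤ I.encard :=
  (hJ.encard_le_eRk_of_subset hJI).trans ((M.eRk_closure_eq I).trans_le (M.eRk_le_encard I))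

variable [DecidableEq α] {S T : Finset α}

open Classical in
/-- The elements `u ∈ S \ T` for which `S - u + x` is independent, when `S` is independent and
spans `x ∉ S` (see `Matroid.Indep.mem_fundCircuit_iff`). -/
noncomputable def exchangeCandidates (M : Matroid α) (S T : Finset α) (x : α) : Finset α :=
  (S \ T).filter (· ∈ M.fundCircuit x S)

lemma mem_exchangeCandidates {x u : α} :
    u ∈ exchangeCandidates M S T x ↔ u ∈ S \ T ∧ u ∈ M.fundCircuit x S := by
  simp [exchangeCandidates]

lemma card_le_card_biUnion_exchangeCandidates (hS : M.Indep (S : Set α))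
    (hT : M.Indep (T : Set α)) {X : Finset α} (hXT : X ⊆ T \ S)
    (hXcl : ∀ x ∈ X, x ∈ M.closure S) :
    #X ≤ #(X.biUnion (exchangeCandidates M S T)) := by
  set A := S ∩ T ∪ X.biUnion (exchangeCandidates M S T)
  have hAS : A ⊆ S := union_subset inter_subset_left
    (biUnion_subset.2 fun _ _ _ hu => (mem_sdiff.1 (mem_exchangeCandidates.1 hu).1).1)
  -- each `x ∈ X` is spanned by the rest of its fundamental circuit, which lies in `A`
  have hspan : ((X ∪ S ∩ T : Finset α) : Set α) ⊆ M.closure A := by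
    intro y hy
    rcases mem_union.1 (mem_coe.1 hy) with hyX | hyST
    · have hyS : y ∉ (S : Set α) := by simpa using (mem_sdiff.1 (hXT hyX)).2
      have hC := hS.fundCircuit_isCircuit (hXcl y hyX) hyS
      refine M.closure_subset_closure ?_
        (hC.mem_closure_sdiff_singleton_of_mem (M.mem_fundCircuit y S))
      intro z ⟨hzC, hzy⟩
      have hzS : z ∈ S :=
        mem_coe.1 ((M.fundCircuit_subset_insert y S hzC).resolve_left (by simpa using hzy))
      by_cases hzT : z ∈ T
      · exact mem_coe.2 (mem_union_left _ (mem_inter.2 ⟨hzS, hzT⟩))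
      · exact mem_coe.2 (mem_union_right _ (mem_biUnion.2
          ⟨y, hyX, mem_exchangeCandidates.2 ⟨mem_sdiff.2 ⟨hzS, hzT⟩, hzC⟩⟩))
    · exact M.subset_closure _ ((coe_subset.2 hAS).trans hS.subset_ground)
        (mem_coe.2 (mem_union_left _ hyST))
  have hind : M.Indep ((X ∪ S ∩ T : Finset α) : Set α) :=
    hT.subset (coe_subset.2 (union_subset (hXT.trans sdiff_subset) inter_subset_right))
  have hcard : #(X ∪ S ∩ T) ≤ #A := by
    have := hind.encard_le_of_subset_closure_s5 hspan
    rwa [Set.encard_coe_eq_coe_finsetCard, Set.encard_coe_eq_coe_finsetCard, Nat.cast_le]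
      at this
  have hdisj : Disjoint X (S ∩ T) :=
    disjoint_left.2 fun x hx hxST => (mem_sdiff.1 (hXT hx)).2 (mem_inter.1 hxST).1
  rw [card_union_of_disjoint hdisj] at hcard
  have : #A ≤ #(S ∩ T) + #(X.biUnion (exchangeCandidates M S T)) := card_union_le _ _
  omega

theorem Indep.exists_exchange_map (hS : M.Indep (S : Set α)) (hT : M.Indep (T : Set α)) :
    ∃ g : α → Finset α,
      (∀ x ∈ T \ S, g x ⊆ S \ T ∧ #(g x) ≤ 1 ∧
        M.Indep (((S : Set α) \ (g x : Set α)) ∪ {x})) ∧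
      (∀ u ∈ S \ T, #((T \ S).filter (fun x => u ∈ g x)) ≤ 1) := by
  classical
  set D := (T \ S).filter fun x => ¬ M.Indep (insert x (S : Set α))
  have hD : ∀ x ∈ D, x ∈ M.closure S ∧ x ∉ (S : Set α) := by
    intro x hx
    obtain ⟨hxTS, hdep⟩ := mem_filter.1 hx
    have hxS : x ∉ (S : Set α) := by simpa using (mem_sdiff.1 hxTS).2
    have hxE : x ∈ M.E := hT.subset_ground (mem_coe.2 (mem_sdiff.1 hxTS).1)
    have hdep' : M.Dep (insert x (S : Set α)) := ⟨hdep, Set.insert_subset hxE hS.subset_ground⟩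
    exact ⟨(hS.mem_closure_iff_of_notMem hxS).2 hdep', hxS⟩
  obtain ⟨f, hf_inj, hf_mem⟩ :=
    (all_card_le_biUnion_card_iff_exists_injective fun x : D => exchangeCandidates M S T x).1
      fun s => by
        have := card_le_card_biUnion_exchangeCandidates hS hT (X := s.image Subtype.val)
          (fun x hx => by
            obtain ⟨⟨y, hy⟩, -, rfl⟩ := mem_image.1 hx
            exact (mem_filter.1 hy).1)
          (fun x hx => by
            obtain ⟨⟨y, hy⟩, -, rfl⟩ := mem_image.1 hx
            exact (hD y hy).1)
        rwa [card_image_of_injective _ Subtype.val_injective, image_biUnion] at this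
  refine ⟨fun x => if h : x ∈ D then {f ⟨x, h⟩} else ∅, fun x hx => ?_, fun u _ => ?_⟩
  · dsimp only
    split_ifs with hxD
    · obtain ⟨hfST, hfC⟩ := mem_exchangeCandidates.1 (hf_mem ⟨x, hxD⟩)
      refine ⟨singleton_subset_iff.2 hfST, (card_singleton _).le, ?_⟩
      have hne : x ≠ f ⟨x, hxD⟩ := fun h =>
        (hD x hxD).2 (h ▸ mem_coe.2 (mem_sdiff.1 hfST).1)
      rw [coe_singleton, Set.union_singleton, Set.insert_sdiff_singleton_comm hne]
      exact (hS.mem_fundCircuit_iff (hD x hxD).1 (hD x hxD).2).1 hfC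
    · refine ⟨empty_subset _, by simp, ?_⟩
      rw [coe_empty, Set.sdiff_empty, Set.union_singleton]
      by_contra hdep
      exact hxD (mem_filter.2 ⟨hx, hdep⟩)
  · have hg : ∀ x, u ∈ (if h : x ∈ D then {f ⟨x, h⟩} else (∅ : Finset α)) →
        ∃ h : x ∈ D, f ⟨x, h⟩ = u := by
      intro x
      split_ifs with h <;> simp [h, eq_comm]
    refine card_le_one.2 fun a ha b hb => ?_
    obtain ⟨haD, hfa⟩ := hg a (mem_filter.1 ha).2
    obtain ⟨hbD, hfb⟩ := hg b (mem_filter.1 hb).2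
    exact congrArg Subtype.val (hf_inj (hfa.trans hfb.symm))

end Matroid

theorem stmt_5_general {α : Type*} [DecidableEq α] (k : ℕ)
    (M : Fin k → Matroid α) (S T : Finset α)
    (hS : ∀ j, (M j).Indep (S : Set α)) (hT : ∀ j, (M j).Indep (T : Set α)) :
    ∃ b : α → Finset α,
      (∀ x ∈ T \ S, b x ⊆ S \ T ∧ (b x).card ≤ k ∧
        ∀ j, (M j).Indep (((S : Set α) \ (b x : Set α)) ∪ {x})) ∧
      (∀ u ∈ S \ T, ((T \ S).filter (fun x => u ∈ b x)).card ≤ k) := by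
  choose g hg_swap hg_mult using fun j => (hS j).exists_exchange_map (hT j)
  refine ⟨fun x => univ.biUnion (g · x), fun x hx => ⟨?_, ?_, fun j => ?_⟩, fun u hu => ?_⟩
  · exact biUnion_subset.2 fun j _ => (hg_swap j x hx).1
  · simpa using card_biUnion_le_card_mul univ (g · x) 1 fun j _ => (hg_swap j x hx).2.1
  · refine (hg_swap j x hx).2.2.subset (Set.union_subset_union_left _ ?_)
    exact Set.sdiff_subset_sdiff_right (coe_subset.2 (subset_biUnion_of_mem (g · x) (mem_univ j)))
  · have hfilter : (T \ S).filter (fun x => u ∈ univ.biUnion (g · x)) =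
        univ.biUnion fun j => (T \ S).filter (u ∈ g j ·) := by
      ext x
      simp
    rw [hfilter]
    simpa using card_biUnion_le_card_mul univ _ 1 fun j _ => hg_mult j u hu

/-- Swap-mapping lemma for `k` matroids: given sets `S, T` independent in each
of `k` matroids on a common finite ground set, there is a mapping `b` from
`T \ S` to subsets of `S \ T` of size at most `k` such that each `k`-swap
`(S \ b x) ∪ {x}` is independent in every matroid, and each `u ∈ S \ T`
appears in at most `k` of the sets `b x`. -/
theorem stmt_5 {α : Type*} [Fintype α] [DecidableEq α] (k : ℕ) (hk : 0 < k)
    (M : Fin k → Matroid α) (S T : Finset α)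
    (hS : ∀ j, (M j).Indep (S : Set α)) (hT : ∀ j, (M j).Indep (T : Set α)) :
    ∃ b : α → Finset α,
      (∀ x ∈ T \ S, b x ⊆ S \ T ∧ (b x).card ≤ k ∧
        ∀ j, (M j).Indep (((S : Set α) \ (b x : Set α)) ∪ {x})) ∧
      (∀ u ∈ S \ T, ((T \ S).filter (fun x => u ∈ b x)).card ≤ k) :=
  stmt_5_general k M S T hS hT
end

section
/- Let f be a nonnegative monotone submodular function on a finite set U, let S* = {u₁,…,u_p} be ordered greedily by marginal value (u₁ maximizes f({u}) over S*, and u₂ maximizes f({u₁,u}) − f({u₁}) over S* \ {u₁}), and set Y = {u₁,u₂}. Then for any ℓ ≥ 3, any W ⊆ U \ {u₁,u₂,u_ℓ}, and any w ∈ W ∪ {φ}: f(((Y ∪ W) \ {w}) ∪ {u_ℓ}) − f(Y ∪ W) ≤ f(Y)/2. -/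
/-!
Submodularity gives diminishing returns, so adding `uℓ` to any superset of
`Y = {u₁, u₂}` gains at most `f(Y ∪ {uℓ}) − f(Y) ≤ f({u₁, uℓ}) − f({u₁})`,
which by the choice of `u₂` is at most `f(Y) − f({u₁})`. By the choice of `u₁` and
subadditivity, `f(Y) ≤ f({u₁}) + f({u₂}) ≤ 2 f({u₁})`, so this is at most `f(Y)/2`.
Removing `w` first only lowers the starting value, by monotonicity.
-/

open Finset

namespace Submodular

variable {α : Type*} [DecidableEq α] {f : Finset α → ℝ}

theorem marginal_le_of_subset (hsub : ∀ A B, f A + f B ≥ f (A ∪ B) + f (A ∩ B))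
    {A B : Finset α} {x : α} (hAB : A ⊆ B) (hxB : x ∉ B) :
    f (insert x B) - f B ≤ f (insert x A) - f A := by
  have h := hsub (insert x A) B
  rw [insert_union, union_eq_right.mpr hAB, insert_inter_of_notMem hxB,
    inter_eq_left.mpr hAB] at h
  linarith

theorem pair_le_add (hsub : ∀ A B, f A + f B ≥ f (A ∪ B) + f (A ∩ B))
    (hempty : 0 ≤ f ∅) {a b : α} (hab : a ≠ b) :
    f {a, b} ≤ f {a} + f {b} := by
  have h := hsub {a} {b}
  rw [singleton_inter_of_notMem (notMem_singleton.mpr hab)] at h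
  exact le_of_add_le_of_nonneg_left h hempty

theorem marginal_le_half_of_greedy (hsub : ∀ A B, f A + f B ≥ f (A ∪ B) + f (A ∩ B))
    (hempty : 0 ≤ f ∅) {u₁ u₂ u : α} (h12 : u₁ ≠ u₂)
    (hu₁ : f {u₂} ≤ f {u₁}) (hu₂ : f {u₁, u} - f {u₁} ≤ f {u₁, u₂} - f {u₁})
    {C : Finset α} (hYC : {u₁, u₂} ⊆ C) (huC : u ∉ C) :
    f (insert u C) - f C ≤ f {u₁, u₂} / 2 := by
  have hu : u ∉ ({u₁, u₂} : Finset α) := fun h => huC (hYC h)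
  have hY := pair_le_add hsub hempty h12
  calc f (insert u C) - f C ≤ f (insert u {u₁, u₂}) - f {u₁, u₂} :=
        marginal_le_of_subset hsub hYC huC
    _ ≤ f (insert u {u₁}) - f {u₁} :=
        marginal_le_of_subset hsub (singleton_subset_iff.mpr (mem_insert_self _ _)) hu
    _ = f {u₁, u} - f {u₁} := by rw [pair_comm]
    _ ≤ f {u₁, u₂} / 2 := by linarith

end Submodular

theorem stmt_6_general {U : Type*} [DecidableEq U] (f : Finset U → ℝ)
    (hnonneg : ∀ A, 0 ≤ f A)
    (hmono : ∀ A B : Finset U, A ⊆ B → f A ≤ f B)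
    (hsub : ∀ A B : Finset U, f A + f B ≥ f (A ∪ B) + f (A ∩ B))
    (Sstar : Finset U) (u₁ u₂ uℓ : U)
    (hu₂S : u₂ ∈ Sstar) (huℓS : uℓ ∈ Sstar)
    (h12 : u₁ ≠ u₂) (hℓ1 : uℓ ≠ u₁) (hℓ2 : uℓ ≠ u₂)
    (hu₁ : ∀ u ∈ Sstar, f {u} ≤ f {u₁})
    (hu₂ : ∀ u ∈ Sstar.erase u₁, f {u₁, u} - f {u₁} ≤ f {u₁, u₂} - f {u₁})
    (W : Finset U) (hW : u₁ ∉ W ∧ u₂ ∉ W ∧ uℓ ∉ W)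
    (w : Option U) (hw : ∀ y, w = some y → y ∈ W) :
    f (insert uℓ (w.elim (({u₁, u₂} : Finset U) ∪ W)
        (fun y => (({u₁, u₂} : Finset U) ∪ W).erase y)))
      - f (({u₁, u₂} : Finset U) ∪ W) ≤ f {u₁, u₂} / 2 := by
  obtain ⟨h1W, h2W, hℓW⟩ := hW
  have hgain (C : Finset U) :
      {u₁, u₂} ⊆ C → uℓ ∉ C → f (insert uℓ C) - f C ≤ f {u₁, u₂} / 2 :=
    Submodular.marginal_le_half_of_greedy hsub (hnonneg ∅) h12
      (hu₁ u₂ hu₂S) (hu₂ uℓ (mem_erase.mpr ⟨hℓ1, huℓS⟩))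
  have hℓY : uℓ ∉ ({u₁, u₂} : Finset U) ∪ W := by simp [hℓ1, hℓ2, hℓW]
  cases w with
  | none => exact hgain _ subset_union_left hℓY
  | some y =>
    have hyW := hw y rfl
    have hYC : ({u₁, u₂} : Finset U) ⊆ (({u₁, u₂} : Finset U) ∪ W).erase y := by
      rw [subset_erase]
      refine ⟨subset_union_left, ?_⟩
      simp only [mem_insert, mem_singleton]
      rintro (rfl | rfl) <;> contradiction
    have hstart := hmono _ _ (erase_subset y (({u₁, u₂} : Finset U) ∪ W))
    have hgain_y := hgain _ hYC fun h => hℓY (mem_of_mem_erase h)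
    simp only [Option.elim]
    linarith

/-- Lemma 5 of the paper: if `u₁, u₂` are the two greedily best elements of
`S*` and `Y = {u₁, u₂}`, then for any `uℓ ∈ S* \ Y`, any
`W ⊆ U \ {u₁, u₂, uℓ}` and any `w ∈ W ∪ {φ}` (with `none` playing the role of
`φ`), the marginal gain `f(((Y ∪ W) \ {w}) ∪ {uℓ}) − f(Y ∪ W)` is at most
`f(Y)/2`. -/
theorem stmt_6 {U : Type*} [Fintype U] [DecidableEq U] (f : Finset U → ℝ)
    (hnonneg : ∀ A, 0 ≤ f A)
    (hmono : ∀ A B : Finset U, A ⊆ B → f A ≤ f B)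
    (hsub : ∀ A B : Finset U, f A + f B ≥ f (A ∪ B) + f (A ∩ B))
    (Sstar : Finset U) (u₁ u₂ uℓ : U)
    (hu₁S : u₁ ∈ Sstar) (hu₂S : u₂ ∈ Sstar) (huℓS : uℓ ∈ Sstar)
    (h12 : u₁ ≠ u₂) (hℓ1 : uℓ ≠ u₁) (hℓ2 : uℓ ≠ u₂)
    (hu₁ : ∀ u ∈ Sstar, f {u} ≤ f {u₁})
    (hu₂ : ∀ u ∈ Sstar.erase u₁, f {u₁, u} - f {u₁} ≤ f {u₁, u₂} - f {u₁})
    (W : Finset U) (hW : u₁ ∉ W ∧ u₂ ∉ W ∧ uℓ ∉ W)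
    (w : Option U) (hw : ∀ y, w = some y → y ∈ W) :
    f (insert uℓ (w.elim (({u₁, u₂} : Finset U) ∪ W)
        (fun y => (({u₁, u₂} : Finset U) ∪ W).erase y)))
      - f (({u₁, u₂} : Finset U) ∪ W) ≤ f {u₁, u₂} / 2 :=
  stmt_6_general f hnonneg hmono hsub Sstar u₁ u₂ uℓ hu₂S huℓS h12 hℓ1 hℓ2 hu₁ hu₂ W hW w hw
end

section
/- Let f be a nonnegative monotone submodular function on finite U, and let u₁, u₂ ∈ U satisfy f({u₁}) ≥ f({u}) for all u in a set S* containing u₁, u₂, and f({u₁,u₂}) − f({u₁}) ≥ f({u₁,u}) − f({u₁}) for all u ∈ S* \ {u₁}. Then f(S*) ≤ (|S*|/2) · f({u₁,u₂}), for |S*| ≥ 2. -/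
/-! Adding the elements of `S* \ {u₁}` one at a time to `{u₁}`, submodularity bounds each gain by
the gain of that element on `{u₁}` alone, which by the choice of `u₂` is at most
`Y - f {u₁}` with `Y = f {u₁, u₂}`. Hence `f S* ≤ f {u₁} + (|S*| - 1) (Y - f {u₁})`, and this is at
most `|S*| Y / 2` because subadditivity and the choice of `u₁` give `Y ≤ 2 f {u₁}`. -/

open Finset

section Submodular

variable {U : Type*} [DecidableEq U] {f : Finset U → ℝ}

lemma union_le_add_of_submodular (hnonneg : ∀ A, 0 ≤ f A)
    (hsub : ∀ A B : Finset U, f A + f B ≥ f (A ∪ B) + f (A ∩ B)) (A B : Finset U) :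
    f (A ∪ B) ≤ f A + f B := by
  linarith [hsub A B, hnonneg (A ∩ B)]

lemma le_add_sum_insert_sub_of_submodular
    (hsub : ∀ A B : Finset U, f A + f B ≥ f (A ∪ B) + f (A ∩ B)) (A S : Finset U) :
    f (A ∪ S) ≤ f A + ∑ u ∈ S, (f (insert u A) - f A) := by
  induction S using Finset.induction_on with
  | empty => simp
  | @insert x S hx ih =>
    have hunion : A ∪ insert x S = (A ∪ S) ∪ insert x A := by
      ext y; simp only [mem_union, mem_insert]; tauto
    have hinter : (A ∪ S) ∩ insert x A = A := by
      ext y; by_cases hy : y = x <;> simp [hy, hx]; tauto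
    have h := hsub (A ∪ S) (insert x A)
    rw [hinter] at h
    rw [sum_insert hx, hunion]
    linarith

lemma le_add_card_mul_of_insert_sub_le
    (hsub : ∀ A B : Finset U, f A + f B ≥ f (A ∪ B) + f (A ∩ B)) {A S : Finset U} {c : ℝ}
    (hgain : ∀ u ∈ S, f (insert u A) - f A ≤ c) :
    f (A ∪ S) ≤ f A + #S * c := by
  have hsum := sum_le_card_nsmul S _ c hgain
  rw [nsmul_eq_mul] at hsum
  linarith [le_add_sum_insert_sub_of_submodular hsub A S]

end Submodular

theorem stmt_7_general {U : Type*} [DecidableEq U] (f : Finset U → ℝ)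
    (hnonneg : ∀ A, 0 ≤ f A)
    (hsub : ∀ A B : Finset U, f A + f B ≥ f (A ∪ B) + f (A ∩ B))
    (Sstar : Finset U) (hcard : 2 ≤ Sstar.card)
    (u₁ u₂ : U) (hu₁S : u₁ ∈ Sstar) (hu₂S : u₂ ∈ Sstar)
    (hu₁ : ∀ u ∈ Sstar, f {u} ≤ f {u₁})
    (hu₂ : ∀ u ∈ Sstar.erase u₁, f {u₁, u} - f {u₁} ≤ f {u₁, u₂} - f {u₁}) :
    f Sstar ≤ ((Sstar.card : ℝ) / 2) * f {u₁, u₂} := by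
  have hgreedy : f Sstar ≤ f {u₁} + ((Sstar.card : ℝ) - 1) * (f {u₁, u₂} - f {u₁}) := by
    have h := le_add_card_mul_of_insert_sub_le hsub (A := {u₁}) (S := Sstar.erase u₁)
      fun u hu => by rw [pair_comm]; exact hu₂ u hu
    rwa [← insert_eq, insert_erase hu₁S, card_erase_of_mem hu₁S,
      Nat.cast_sub (by omega : 1 ≤ Sstar.card), Nat.cast_one] at h
  have hpair : f {u₁, u₂} ≤ 2 * f {u₁} := by
    have h := union_le_add_of_submodular hnonneg hsub {u₁} {u₂}
    rw [← insert_eq] at h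
    linarith [hu₁ u₂ hu₂S]
  have hn : (2 : ℝ) ≤ Sstar.card := by exact_mod_cast hcard
  nlinarith [mul_nonneg (sub_nonneg.2 hn) (sub_nonneg.2 hpair)]

/-- If `u₁, u₂` are the two greedily best elements of `S*`, then
`f(S*) ≤ (|S*|/2) · f({u₁, u₂})`. -/
theorem stmt_7 {U : Type*} [Fintype U] [DecidableEq U] (f : Finset U → ℝ)
    (hnonneg : ∀ A, 0 ≤ f A)
    (hmono : ∀ A B : Finset U, A ⊆ B → f A ≤ f B)
    (hsub : ∀ A B : Finset U, f A + f B ≥ f (A ∪ B) + f (A ∩ B))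
    (Sstar : Finset U) (hcard : 2 ≤ Sstar.card)
    (u₁ u₂ : U) (hu₁S : u₁ ∈ Sstar) (hu₂S : u₂ ∈ Sstar) (h12 : u₁ ≠ u₂)
    (hu₁ : ∀ u ∈ Sstar, f {u} ≤ f {u₁})
    (hu₂ : ∀ u ∈ Sstar.erase u₁, f {u₁, u} - f {u₁} ≤ f {u₁, u₂} - f {u₁}) :
    f Sstar ≤ ((Sstar.card : ℝ) / 2) * f {u₁, u₂} :=
  stmt_7_general f hnonneg hsub Sstar hcard u₁ u₂ hu₁S hu₂S hu₁ hu₂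
end

section
/- Let f be a monotone submodular function with f(∅) ≥ 0 on finite U, let S = {u₁,…,u_m} ⊆ U, and let y₁,…,y_K be K distinct elements of S. Then Σ_{i=1}^K (f(S) − f(S \ {y_i})) ≤ f(S). -/
/-!
Removing the elements of `Y` from `S` one at a time, submodularity says that the marginal loss of
an element only grows as the set it is removed from shrinks. So the losses `f S - f (S \ {y})`
telescope to at most `f S - f (S \ Y)`, and `f (S \ Y) ≥ f ∅ ≥ 0` by monotonicity.
-/

open Finset

section Submodular

variable {α β : Type*} [DecidableEq α] [AddCommGroup β] [PartialOrder β] [IsOrderedAddMonoid β]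
  {f : Finset α → β}

theorem sub_erase_le_sub_erase_of_subset
    (hsub : ∀ A B : Finset α, f (A ∪ B) + f (A ∩ B) ≤ f A + f B)
    {A B : Finset α} (hAB : A ⊆ B) {a : α} (ha : a ∈ A) :
    f B - f (B.erase a) ≤ f A - f (A.erase a) := by
  have h := hsub (B.erase a) A
  rw [erase_union_of_mem ha, union_eq_left.mpr hAB, erase_inter, inter_eq_right.mpr hAB] at h
  rw [sub_le_sub_iff]
  simpa only [add_comm] using h

theorem sum_sub_erase_le_sub_sdiff
    (hsub : ∀ A B : Finset α, f (A ∪ B) + f (A ∩ B) ≤ f A + f B) (S Y : Finset α) :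
    ∑ y ∈ Y, (f S - f (S.erase y)) ≤ f S - f (S \ Y) := by
  induction Y using Finset.induction_on with
  | empty => simp
  | insert a Y haY ih =>
    rw [sum_insert haY]
    by_cases haS : a ∈ S
    · have hloss : f S - f (S.erase a) ≤ f (S \ Y) - f (S \ insert a Y) := by
        rw [sdiff_insert]
        exact sub_erase_le_sub_erase_of_subset hsub sdiff_subset (mem_sdiff.mpr ⟨haS, haY⟩)
      calc f S - f (S.erase a) + ∑ y ∈ Y, (f S - f (S.erase y))
          ≤ (f (S \ Y) - f (S \ insert a Y)) + (f S - f (S \ Y)) := add_le_add hloss ih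
        _ = f S - f (S \ insert a Y) := by abel
    · rw [erase_eq_of_notMem haS, sdiff_insert_of_notMem haS, sub_self, zero_add]
      exact ih

end Submodular

theorem stmt_8_general {U : Type*} [DecidableEq U] (f : Finset U → ℝ)
    (hmono : ∀ A B : Finset U, A ⊆ B → f A ≤ f B)
    (hsub : ∀ A B : Finset U, f A + f B ≥ f (A ∪ B) + f (A ∩ B))
    (hempty : 0 ≤ f ∅)
    (S Y : Finset U) :
    ∑ y ∈ Y, (f S - f (S.erase y)) ≤ f S := by
  have hloss := sum_sub_erase_le_sub_sdiff hsub S Y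
  have hrest : 0 ≤ f (S \ Y) := hempty.trans (hmono _ _ (empty_subset _))
  linarith

/-- Local-search inequality: for distinct elements `y ∈ Y ⊆ S`, the sum of the
marginal losses `f S − f (S \ {y})` is at most `f S`. -/
theorem stmt_8 {U : Type*} [Fintype U] [DecidableEq U] (f : Finset U → ℝ)
    (hmono : ∀ A B : Finset U, A ⊆ B → f A ≤ f B)
    (hsub : ∀ A B : Finset U, f A + f B ≥ f (A ∪ B) + f (A ∩ B))
    (hempty : 0 ≤ f ∅)
    (S Y : Finset U) (hY : Y ⊆ S) :
    ∑ y ∈ Y, (f S - f (S.erase y)) ≤ f S :=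
  stmt_8_general f hmono hsub hempty S Y
end

section
/- Let f be a monotone submodular function with f(∅) ≥ 0 on finite U, S ⊆ U a finite set, and let b₁,…,b_m be subsets of S such that each element of S belongs to at most k of the b_i. Then Σ_{i=1}^m (f(S) − f(S \ b_i)) ≤ k · f(S). -/
/-!
Induct on `S`. Adding a new element `a` to `T` raises `f S - f (S \ b)` by at most the marginal
gain `f (insert a T) - f T` when `a ∈ b`, and not at all when `a ∉ b` (diminishing returns). That
gain is nonnegative and is paid by at most `k` of the sets, so summing the gains telescopes to
`k * (f S - f ∅) ≤ k * f S`.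
-/

open Finset

section

variable {α ι : Type*} [DecidableEq α]

def IsSubmodular (f : Finset α → ℝ) : Prop :=
  ∀ A B, f (A ∪ B) + f (A ∩ B) ≤ f A + f B

namespace IsSubmodular

variable {f : Finset α → ℝ}

theorem insert_sub_le_insert_sub (hf : IsSubmodular f) {A B : Finset α} (hAB : A ⊆ B) {a : α}
    (ha : a ∉ B) : f (insert a B) - f B ≤ f (insert a A) - f A := by
  have hunion : insert a A ∪ B = insert a B := by rw [insert_union, union_eq_right.mpr hAB]
  have hinter : insert a A ∩ B = A := by
    rw [insert_inter_of_notMem ha, inter_eq_left.mpr hAB]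
  have := hf (insert a A) B
  rw [hunion, hinter] at this
  linarith

theorem sub_sdiff_insert_le (hf : IsSubmodular f) {T : Finset α} {a : α} (ha : a ∉ T)
    (b : Finset α) :
    f (insert a T) - f (insert a T \ b) ≤
      (if a ∈ b then f (insert a T) - f T else 0) + (f T - f (T \ b)) := by
  split_ifs with hab
  · rw [insert_sdiff_of_mem T hab]
    linarith
  · rw [insert_sdiff_of_notMem T hab]
    linarith [hf.insert_sub_le_insert_sub (sdiff_subset (t := b)) ha]

theorem sum_sub_sdiff_le (hf : IsSubmodular f) (hmono : Monotone f) (s : Finset ι)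
    (b : ι → Finset α) (k : ℕ) (S : Finset α)
    (hcount : ∀ u ∈ S, #{i ∈ s | u ∈ b i} ≤ k) :
    ∑ i ∈ s, (f S - f (S \ b i)) ≤ k * (f S - f ∅) := by
  induction S using Finset.induction_on with
  | empty => simp
  | insert a T ha ih =>
    have hgain : 0 ≤ f (insert a T) - f T := sub_nonneg.mpr (hmono (subset_insert a T))
    have hcount_a : (#{i ∈ s | a ∈ b i} : ℝ) ≤ k := by
      exact_mod_cast hcount a (mem_insert_self a T)
    have ih := ih fun u hu => hcount u (mem_insert_of_mem hu)
    calc ∑ i ∈ s, (f (insert a T) - f (insert a T \ b i))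
        ≤ ∑ i ∈ s, ((if a ∈ b i then f (insert a T) - f T else 0) + (f T - f (T \ b i))) :=
          sum_le_sum fun i _ => hf.sub_sdiff_insert_le ha (b i)
      _ = #{i ∈ s | a ∈ b i} * (f (insert a T) - f T) + ∑ i ∈ s, (f T - f (T \ b i)) := by
          rw [sum_add_distrib, ← sum_filter, sum_const, nsmul_eq_mul]
      _ ≤ k * (f (insert a T) - f T) + k * (f T - f ∅) := by gcongr
      _ = k * (f (insert a T) - f ∅) := by ring

end IsSubmodular

end

theorem stmt_9_general {U : Type*} [DecidableEq U] (f : Finset U → ℝ)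
    (hmono : ∀ A B : Finset U, A ⊆ B → f A ≤ f B)
    (hsub : ∀ A B : Finset U, f A + f B ≥ f (A ∪ B) + f (A ∩ B))
    (hempty : 0 ≤ f ∅)
    (k m : ℕ) (S : Finset U) (b : Fin m → Finset U)
    (hcount : ∀ u ∈ S, (Finset.univ.filter (fun i => u ∈ b i)).card ≤ k) :
    ∑ i, (f S - f (S \ b i)) ≤ (k : ℝ) * f S := by
  calc ∑ i, (f S - f (S \ b i)) ≤ k * (f S - f ∅) :=
        IsSubmodular.sum_sub_sdiff_le hsub (fun A B h => hmono A B h) univ b k S hcount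
    _ ≤ k * f S := by gcongr; linarith

/-- `k`-swap local-search inequality: if `b₁, …, b_m ⊆ S` and each element of
`S` belongs to at most `k` of the `b i`, then
`∑ i, (f S − f (S \ b i)) ≤ k · f S`. -/
theorem stmt_9 {U : Type*} [Fintype U] [DecidableEq U] (f : Finset U → ℝ)
    (hmono : ∀ A B : Finset U, A ⊆ B → f A ≤ f B)
    (hsub : ∀ A B : Finset U, f A + f B ≥ f (A ∪ B) + f (A ∩ B))
    (hempty : 0 ≤ f ∅)
    (k m : ℕ) (hk : 1 ≤ k) (S : Finset U) (b : Fin m → Finset U)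
    (hb : ∀ i, b i ⊆ S)
    (hcount : ∀ u ∈ S, (Finset.univ.filter (fun i => u ∈ b i)).card ≤ k) :
    ∑ i, (f S - f (S \ b i)) ≤ (k : ℝ) * f S :=
  stmt_9_general f hmono hsub hempty k m S b hcount
end

section
/- Let f be a monotone submodular function on finite U, S* and S two subsets, and b : S* \ S → (S \ S*) ∪ {φ} a mapping with |b⁻¹(y)| ≤ 1 for all y ∈ S \ S*. Suppose that for every x ∈ S* \ S, f((S \ {b(x)}) ∪ {x}) ≤ f(S). Then f(S*) ≤ 2·f(S), assuming f(∅) ≥ 0. -/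
open Finset

/- Each swap bound `f(S - b(x) + x) ≤ f(S)` combines with submodularity into
`f(S + x) - f(S) ≤ f(S) - f(S - b(x))`. Summing over `x ∈ S* \ S`, the left sides bound
`f(S ∪ S*) - f(S)` from above. Since `b` is injective, the right sides are distinct
nonnegative terms `f(S) - f(S - y)`, `y ∈ S \ S*`, and by submodularity all these terms
together sum to at most `f(S) - f(S ∩ S*) ≤ f(S)`. -/

section

variable {α : Type*} [DecidableEq α]

def Submodular (f : Finset α → ℝ) : Prop :=
  ∀ A B : Finset α, f (A ∪ B) + f (A ∩ B) ≤ f A + f B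

namespace Submodular

variable {f : Finset α → ℝ}

theorem union_le_add_sum_marginal (hf : Submodular f) (S T : Finset α) :
    f (S ∪ T) ≤ f S + ∑ x ∈ T \ S, (f (insert x S) - f S) := by
  induction T using Finset.induction_on with
  | empty => simp
  | @insert a T ha ih =>
    by_cases haS : a ∈ S
    · rwa [union_insert, insert_eq_of_mem (mem_union_left T haS), insert_sdiff_of_mem T haS]
    · have hunion : insert a S ∪ (S ∪ T) = S ∪ insert a T := by
        rw [insert_union, ← union_assoc, union_self, union_insert]
      have hinter : insert a S ∩ (S ∪ T) = S := by
        rw [insert_inter_of_notMem (by simp [haS, ha]), inter_eq_left.mpr subset_union_left]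
      have := hf (insert a S) (S ∪ T)
      rw [hunion, hinter] at this
      rw [insert_sdiff_of_notMem T haS, sum_insert (fun h => ha (mem_sdiff.mp h).1)]
      linarith

theorem sum_sub_erase_le (hf : Submodular f) {S T : Finset α} (hT : T ⊆ S) :
    ∑ y ∈ T, (f S - f (S.erase y)) ≤ f S - f (S \ T) := by
  induction T using Finset.induction_on with
  | empty => simp
  | @insert a T ha ih =>
    have haS : a ∈ S := hT (mem_insert_self a T)
    have hunion : S.erase a ∪ (S \ T) = S := by
      rw [← sdiff_singleton_eq_erase, ← sdiff_inter_distrib_right,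
        singleton_inter_of_notMem ha, sdiff_empty]
    have hinter : S.erase a ∩ (S \ T) = S \ insert a T := by
      ext z
      simp only [mem_inter, mem_erase, mem_sdiff, mem_insert]
      tauto
    have := hf (S.erase a) (S \ T)
    rw [hunion, hinter] at this
    rw [sum_insert ha]
    linarith [ih ((subset_insert a T).trans hT)]

theorem marginal_le_sub_erase (hf : Submodular f) {S : Finset α} {x y : α} (hx : x ∉ S)
    (hswap : f (insert x (S.erase y)) ≤ f S) :
    f (insert x S) - f S ≤ f S - f (S.erase y) := by
  have hunion : S ∪ insert x (S.erase y) = insert x S := by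
    rw [union_insert, union_eq_left.mpr (erase_subset y S)]
  have hinter : S ∩ insert x (S.erase y) = S.erase y := by
    rw [inter_insert_of_notMem hx, inter_eq_right.mpr (erase_subset y S)]
  have := hf S (insert x (S.erase y))
  rw [hunion, hinter] at this
  linarith

end Submodular

end

theorem sum_option_elim_le_sum {ι κ M : Type*} [AddCommMonoid M] [PartialOrder M]
    [IsOrderedAddMonoid M] {s : Finset ι} {t : Finset κ} {b : ι → Option κ}
    {g : κ → M} (hg : ∀ y ∈ t, 0 ≤ g y) (hmaps : ∀ x ∈ s, ∀ y, b x = some y → y ∈ t)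
    (hinj : ∀ x₁ ∈ s, ∀ x₂ ∈ s, ∀ y, b x₁ = some y → b x₂ = some y → x₁ = x₂) :
    ∑ x ∈ s, (b x).elim 0 g ≤ ∑ y ∈ t, g y := by
  classical
  calc ∑ x ∈ s, (b x).elim 0 g
      = ∑ x ∈ s with b x ≠ none, (b x).elim 0 g := by
        refine (sum_filter_of_ne (p := fun x => b x ≠ none) fun x _ hx hb => hx ?_).symm
        rw [hb, Option.elim_none]
    _ = ∑ o ∈ (s.filter fun x => b x ≠ none).image b, o.elim 0 g := by
        refine (sum_image (f := fun o : Option κ => o.elim 0 g) fun x₁ h₁ x₂ h₂ heq => ?_).symm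
        obtain ⟨y, hy⟩ := Option.ne_none_iff_exists'.mp (mem_filter.mp h₁).2
        exact hinj x₁ (mem_filter.mp h₁).1 x₂ (mem_filter.mp h₂).1 y hy (heq ▸ hy)
    _ ≤ ∑ o ∈ t.map .some, o.elim 0 g := by
        refine sum_le_sum_of_subset_of_nonneg ?_ fun o ho _ => ?_
        · intro o ho
          obtain ⟨x, hx, rfl⟩ := mem_image.mp ho
          obtain ⟨y, hy⟩ := Option.ne_none_iff_exists'.mp (mem_filter.mp hx).2
          rw [hy]
          exact mem_map_of_mem _ (hmaps x (mem_filter.mp hx).1 y hy)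
        · obtain ⟨y, hy, rfl⟩ := mem_map.mp ho
          exact hg y hy
    _ = ∑ y ∈ t, g y := sum_map _ _ _

theorem stmt_10_general {U : Type*} [DecidableEq U] (f : Finset U → ℝ)
    (hmono : ∀ A B : Finset U, A ⊆ B → f A ≤ f B)
    (hsub : ∀ A B : Finset U, f A + f B ≥ f (A ∪ B) + f (A ∩ B))
    (hempty : 0 ≤ f ∅)
    (Sstar S : Finset U) (b : U → Option U)
    (himg : ∀ x ∈ Sstar \ S, ∀ y, b x = some y → y ∈ S \ Sstar)
    (hinj : ∀ y ∈ S \ Sstar, ∀ x₁ ∈ Sstar \ S, ∀ x₂ ∈ Sstar \ S,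
      b x₁ = some y → b x₂ = some y → x₁ = x₂)
    (hswap : ∀ x ∈ Sstar \ S,
      f (insert x ((b x).elim S (fun y => S.erase y))) ≤ f S) :
    f Sstar ≤ 2 * f S := by
  have hf : Submodular f := hsub
  have hmarginal : ∀ x ∈ Sstar \ S,
      f (insert x S) - f S ≤ (b x).elim 0 fun y => f S - f (S.erase y) := by
    intro x hx
    have hswapx := hswap x hx
    cases hb : b x with
    | none => simpa [hb] using hswapx
    | some y =>
      rw [hb] at hswapx
      exact hf.marginal_le_sub_erase (mem_sdiff.mp hx).2 hswapx
  have hinter : 0 ≤ f (S \ (S \ Sstar)) := hempty.trans (hmono _ _ (empty_subset _))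
  calc f Sstar
      ≤ f (S ∪ Sstar) := hmono _ _ subset_union_right
    _ ≤ f S + ∑ x ∈ Sstar \ S, (f (insert x S) - f S) := hf.union_le_add_sum_marginal S Sstar
    _ ≤ f S + ∑ x ∈ Sstar \ S, (b x).elim 0 fun y => f S - f (S.erase y) := by
        gcongr with x hx
        exact hmarginal x hx
    _ ≤ f S + ∑ y ∈ S \ Sstar, (f S - f (S.erase y)) := by
        gcongr
        refine sum_option_elim_le_sum (fun y _ => ?_) himg fun x₁ h₁ x₂ h₂ y h₁y h₂y =>
          hinj y (himg x₁ h₁ y h₁y) x₁ h₁ x₂ h₂ h₁y h₂y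
        linarith [hmono _ _ (erase_subset y S)]
    _ ≤ f S + (f S - f (S \ (S \ Sstar))) := by
        gcongr
        exact hf.sum_sub_erase_le sdiff_subset
    _ ≤ 2 * f S := by linarith

/-- Case 1 of the single-matroid analysis: if `b` maps `S* \ S` injectively into
`(S \ S*) ∪ {φ}` (with `none` as `φ`) and no swap improves `f`, then
`f(S*) ≤ 2 · f(S)`. -/
theorem stmt_10 {U : Type*} [Fintype U] [DecidableEq U] (f : Finset U → ℝ)
    (hmono : ∀ A B : Finset U, A ⊆ B → f A ≤ f B)
    (hsub : ∀ A B : Finset U, f A + f B ≥ f (A ∪ B) + f (A ∩ B))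
    (hempty : 0 ≤ f ∅)
    (Sstar S : Finset U) (b : U → Option U)
    (himg : ∀ x ∈ Sstar \ S, ∀ y, b x = some y → y ∈ S \ Sstar)
    (hinj : ∀ y ∈ S \ Sstar, ∀ x₁ ∈ Sstar \ S, ∀ x₂ ∈ Sstar \ S,
      b x₁ = some y → b x₂ = some y → x₁ = x₂)
    (hswap : ∀ x ∈ Sstar \ S,
      f (insert x ((b x).elim S (fun y => S.erase y))) ≤ f S) :
    f Sstar ≤ 2 * f S :=
  stmt_10_general f hmono hsub hempty Sstar S b himg hinj hswap
end

section
/- Let f be a monotone submodular function on finite U with f(∅) ≥ 0, S*, S ⊆ U, and b : S* \ S → {subsets of S \ S* of size ≤ k} a mapping such that each element of S \ S* appears in at most k of the sets b(x). Suppose for every x ∈ S* \ S that f((S \ b(x)) ∪ {x}) ≤ f(S). Then f(S*) ≤ (k+1)·f(S). -/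
/-!
Adding the elements of `S* \ S` to `S` one at a time, submodularity bounds `f (S ∪ S*) - f S` by
the sum of the marginal gains `f (S + x) - f S`. By submodularity again and local optimality, the
gain of `x` is at most the loss `f S - f (S \ b x)` of removing its swap partners. Removing the
elements of `S \ S*` in a fixed order and charging each set `b x` to the consecutive losses of
its elements, every such loss is charged at most `k` times, so the total loss is at most
`k (f S - f (S ∩ S*)) ≤ k f S`.
-/

open Finset

section Submodular

variable {U : Type*} [DecidableEq U] {f : Finset U → ℝ}

theorem sub_erase_le_sub_erase_of_subset_s11
    (hsub : ∀ A B : Finset U, f (A ∪ B) + f (A ∩ B) ≤ f A + f B)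
    {X Y : Finset U} {u : U} (hYX : Y ⊆ X) (hu : u ∈ Y) :
    f X - f (X.erase u) ≤ f Y - f (Y.erase u) := by
  have hunion : Y ∪ X.erase u = X := by
    ext v
    by_cases hv : v = u
    · simp [hv, hu, hYX hu]
    · simpa [hv] using fun h => hYX h
  have hinter : Y ∩ X.erase u = Y.erase u := by
    rw [inter_erase, inter_eq_left.mpr hYX]
  have := hsub Y (X.erase u)
  rw [hunion, hinter] at this
  linarith

theorem sub_insert_le_sub_insert_of_subset
    (hsub : ∀ A B : Finset U, f (A ∪ B) + f (A ∩ B) ≤ f A + f B)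
    {A B : Finset U} {x : U} (hAB : A ⊆ B) (hx : x ∉ B) :
    f (insert x B) - f B ≤ f (insert x A) - f A := by
  have := sub_erase_le_sub_erase_of_subset_s11 hsub (insert_subset_insert x hAB) (mem_insert_self x A)
  rwa [erase_insert hx, erase_insert fun h => hx (hAB h)] at this

theorem le_add_sum_sub_insert (hsub : ∀ A B : Finset U, f (A ∪ B) + f (A ∩ B) ≤ f A + f B)
    (S A : Finset U) : f (S ∪ A) ≤ f S + ∑ x ∈ A, (f (insert x S) - f S) := by
  induction A using Finset.induction_on with
  | empty => simp
  | @insert a A ha ih =>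
    rw [sum_insert ha, union_insert]
    by_cases haS : a ∈ S
    · rw [insert_eq_of_mem (mem_union_left A haS), insert_eq_of_mem haS]
      linarith
    · have := sub_insert_le_sub_insert_of_subset hsub subset_union_left
        (by simp [haS, ha] : a ∉ S ∪ A)
      linarith

theorem sub_sdiff_inter_insert_le
    (hsub : ∀ A B : Finset U, f (A ∪ B) + f (A ∩ B) ≤ f A + f B)
    {S T B : Finset U} {u : U} (hu : u ∈ S \ T) :
    f S - f (S \ (B ∩ insert u T)) ≤
      f S - f (S \ (B ∩ T)) + if u ∈ B then f (S \ T) - f (S \ insert u T) else 0 := by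
  split_ifs with huB
  · rw [inter_insert_of_mem huB, sdiff_insert, sdiff_insert]
    have := sub_erase_le_sub_erase_of_subset_s11 hsub
      (sdiff_subset_sdiff le_rfl inter_subset_right : S \ T ⊆ S \ (B ∩ T)) hu
    linarith
  · rw [inter_insert_of_notMem huB, add_zero]

theorem sum_sub_sdiff_le_mul (hmono : Monotone f)
    (hsub : ∀ A B : Finset U, f (A ∪ B) + f (A ∩ B) ≤ f A + f B)
    {ι : Type*} {I : Finset ι} {c : ι → Finset U} {S T : Finset U} {k : ℕ} (hTS : T ⊆ S)
    (hc : ∀ i ∈ I, c i ⊆ T) (hcount : ∀ u ∈ T, #{i ∈ I | u ∈ c i} ≤ k) :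
    ∑ i ∈ I, (f S - f (S \ c i)) ≤ k * (f S - f (S \ T)) := by
  suffices key : ∀ T' ⊆ T, ∑ i ∈ I, (f S - f (S \ (c i ∩ T'))) ≤ k * (f S - f (S \ T')) by
    calc ∑ i ∈ I, (f S - f (S \ c i))
        = ∑ i ∈ I, (f S - f (S \ (c i ∩ T))) :=
          sum_congr rfl fun i hi => by rw [inter_eq_left.mpr (hc i hi)]
      _ ≤ k * (f S - f (S \ T)) := key T subset_rfl
  intro T' hT'
  induction T' using Finset.induction_on with
  | empty => simp
  | @insert u T' hu ih =>
    have huT : u ∈ T := hT' (mem_insert_self u T')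
    set d := f (S \ T') - f (S \ insert u T')
    have hd : 0 ≤ d := sub_nonneg.mpr (hmono (sdiff_subset_sdiff le_rfl (subset_insert u T')))
    calc ∑ i ∈ I, (f S - f (S \ (c i ∩ insert u T')))
        ≤ ∑ i ∈ I, (f S - f (S \ (c i ∩ T')) + if u ∈ c i then d else 0) :=
          sum_le_sum fun i _ => sub_sdiff_inter_insert_le hsub (mem_sdiff.mpr ⟨hTS huT, hu⟩)
      _ = ∑ i ∈ I, (f S - f (S \ (c i ∩ T'))) + #{i ∈ I | u ∈ c i} * d := by
          rw [sum_add_distrib, ← sum_filter, sum_const, nsmul_eq_mul]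
      _ ≤ k * (f S - f (S \ T')) + k * d := by
          gcongr
          · exact ih ((subset_insert u T').trans hT')
          · exact_mod_cast hcount u huT
      _ = k * (f S - f (S \ insert u T')) := by ring

end Submodular

theorem stmt_11_general {U : Type*} [DecidableEq U] (f : Finset U → ℝ)
    (hmono : ∀ A B : Finset U, A ⊆ B → f A ≤ f B)
    (hsub : ∀ A B : Finset U, f A + f B ≥ f (A ∪ B) + f (A ∩ B))
    (hempty : 0 ≤ f ∅)
    (k : ℕ)
    (Sstar S : Finset U) (b : U → Finset U)
    (himg : ∀ x ∈ Sstar \ S, b x ⊆ S \ Sstar ∧ (b x).card ≤ k)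
    (hcount : ∀ u ∈ S \ Sstar, ((Sstar \ S).filter (fun x => u ∈ b x)).card ≤ k)
    (hswap : ∀ x ∈ Sstar \ S, f (insert x (S \ b x)) ≤ f S) :
    f Sstar ≤ ((k : ℝ) + 1) * f S := by
  have hmono' : Monotone f := fun A B => hmono A B
  have hgain : ∀ x ∈ Sstar \ S, f (insert x S) - f S ≤ f S - f (S \ b x) := fun x hx => by
    have := sub_insert_le_sub_insert_of_subset hsub (sdiff_subset (t := b x)) (mem_sdiff.mp hx).2
    linarith [hswap x hx]
  have hloss := sum_sub_sdiff_le_mul hmono' hsub sdiff_subset (fun x hx => (himg x hx).1) hcount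
  rw [sdiff_sdiff_self_left] at hloss
  have hinter : 0 ≤ f (S ∩ Sstar) := hempty.trans (hmono' (empty_subset _))
  calc f Sstar
      ≤ f (S ∪ (Sstar \ S)) := hmono' (subset_union_right.trans union_sdiff_self_eq_union.ge)
    _ ≤ f S + ∑ x ∈ Sstar \ S, (f (insert x S) - f S) := le_add_sum_sub_insert hsub S _
    _ ≤ f S + ∑ x ∈ Sstar \ S, (f S - f (S \ b x)) := by
      gcongr f S + ?_
      exact sum_le_sum hgain
    _ ≤ f S + k * (f S - f (S ∩ Sstar)) := by gcongr
    _ ≤ (k + 1) * f S := by linarith [mul_nonneg k.cast_nonneg hinter]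

/-- Case 1 of the `k`-matroid analysis: if `b` maps each `x ∈ S* \ S` to a
subset of `S \ S*` of size at most `k`, each element of `S \ S*` appears in at
most `k` of the sets `b x`, and no `k`-swap improves `f`, then
`f(S*) ≤ (k+1) · f(S)`. -/
theorem stmt_11 {U : Type*} [Fintype U] [DecidableEq U] (f : Finset U → ℝ)
    (hmono : ∀ A B : Finset U, A ⊆ B → f A ≤ f B)
    (hsub : ∀ A B : Finset U, f A + f B ≥ f (A ∪ B) + f (A ∩ B))
    (hempty : 0 ≤ f ∅)
    (k : ℕ) (hk : 1 ≤ k)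
    (Sstar S : Finset U) (b : U → Finset U)
    (himg : ∀ x ∈ Sstar \ S, b x ⊆ S \ Sstar ∧ (b x).card ≤ k)
    (hcount : ∀ u ∈ S \ Sstar, ((Sstar \ S).filter (fun x => u ∈ b x)).card ≤ k)
    (hswap : ∀ x ∈ Sstar \ S, f (insert x (S \ b x)) ≤ f S) :
    f Sstar ≤ ((k : ℝ) + 1) * f S :=
  stmt_11_general f hmono hsub hempty k Sstar S b himg hcount hswap
end

section
/- Let g be a monotone submodular function with g(∅) = 0 on finite U. Suppose S*, S_t ⊆ U, each element x has a cost c_x ≥ 0 with Σ_{x ∈ S* \ S_t} c_x ≤ C for some C > 0, there is an injective-type mapping b : S* \ S_t → (S_t \ S*) ∪ {φ} (at most one preimage per real element), and for each x ∈ S* \ S_t, g((S_t \ {b(x)}) ∪ {x}) − g(S_t) ≤ c_x · ρ for some ρ ≥ 0. Then g(S*) ≤ 2·g(S_t) + C·ρ. -/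
/-!
Adding the elements of `S* \ S_t` to `S_t` one at a time, submodularity bounds `g(S*) - g(S_t)`
by the sum of the single-element marginals `g(S_t + x) - g(S_t)`. Each of these is at most the
marginal of `x` on the smaller set `S_t - b(x)`, which splits into the swap gain (at most `c_x ρ`)
plus the loss `g(S_t) - g(S_t - b(x))`. Since the removed elements `b(x)` are distinct,
submodularity again bounds the total loss by `g(S_t) - g(S_t \ b(S* \ S_t)) ≤ g(S_t)`.
-/

open Finset

section SetFunction

variable {α ι : Type*} [DecidableEq α] {g : Finset α → ℝ}

theorem marginal_antitone (hmono : ∀ A B : Finset α, A ⊆ B → g A ≤ g B)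
    (hsub : ∀ A B : Finset α, g A + g B ≥ g (A ∪ B) + g (A ∩ B))
    {A B : Finset α} (hAB : A ⊆ B) (x : α) :
    g (insert x B) - g B ≤ g (insert x A) - g A := by
  by_cases hxB : x ∈ B
  · rw [insert_eq_self.2 hxB]
    linarith [hmono A (insert x A) (subset_insert x A)]
  · have hunion : insert x A ∪ B = insert x B := by rw [insert_union, union_eq_right.2 hAB]
    have hinter : insert x A ∩ B = A := by
      rw [insert_inter_of_notMem hxB, inter_eq_left.2 hAB]
    linarith [hunion ▸ hinter ▸ hsub (insert x A) B]

theorem le_add_sum_marginal (hmono : ∀ A B : Finset α, A ⊆ B → g A ≤ g B)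
    (hsub : ∀ A B : Finset α, g A + g B ≥ g (A ∪ B) + g (A ∩ B)) (T S : Finset α) :
    g (T ∪ S) ≤ g T + ∑ x ∈ S, (g (insert x T) - g T) := by
  induction S using Finset.induction with
  | empty => simp
  | insert a S haS ih =>
    rw [sum_insert haS, union_insert]
    linarith [marginal_antitone hmono hsub (subset_union_left : T ⊆ T ∪ S) a]

theorem sum_sub_sdiff_le (hsub : ∀ A B : Finset α, g A + g B ≥ g (A ∪ B) + g (A ∩ B))
    (S : Finset α) {s : Finset ι} {R : ι → Finset α} (hR : (s : Set ι).PairwiseDisjoint R) :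
    ∑ i ∈ s, (g S - g (S \ R i)) ≤ g S - g (S \ s.biUnion R) := by
  classical
  induction s using Finset.induction with
  | empty => simp
  | insert i s his ih =>
    have hdisj : Disjoint (R i) (s.biUnion R) :=
      (disjoint_biUnion_right _ _ _).2 fun j hj =>
        hR (mem_insert_self i s) (mem_insert_of_mem hj) (by rintro rfl; exact his hj)
    have hunion : (S \ R i) ∪ (S \ s.biUnion R) = S := by
      rw [← sdiff_inter_distrib_right, disjoint_iff_inter_eq_empty.1 hdisj, sdiff_empty]
    have hinter : (S \ R i) ∩ (S \ s.biUnion R) = S \ (insert i s).biUnion R := by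
      rw [← sdiff_union_distrib, biUnion_insert]
    rw [sum_insert his]
    linarith [ih (hR.subset (by simp)), hunion ▸ hinter ▸ hsub (S \ R i) (S \ s.biUnion R)]

end SetFunction

theorem stmt_13_general {U : Type*} [DecidableEq U] (g : Finset U → ℝ)
    (hmono : ∀ A B : Finset U, A ⊆ B → g A ≤ g B)
    (hsub : ∀ A B : Finset U, g A + g B ≥ g (A ∪ B) + g (A ∩ B))
    (hempty : g ∅ = 0)
    (Sstar St : Finset U) (c : U → ℝ)
    (C : ℝ) (hsum : ∑ x ∈ Sstar \ St, c x ≤ C)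
    (ρ : ℝ) (hρ : 0 ≤ ρ)
    (b : U → Option U)
    (himg : ∀ x ∈ Sstar \ St, ∀ y, b x = some y → y ∈ St \ Sstar)
    (hinj : ∀ y ∈ St \ Sstar, ∀ x₁ ∈ Sstar \ St, ∀ x₂ ∈ Sstar \ St,
      b x₁ = some y → b x₂ = some y → x₁ = x₂)
    (hswap : ∀ x ∈ Sstar \ St,
      g (insert x ((b x).elim St (fun y => St.erase y))) - g St ≤ c x * ρ) :
    g Sstar ≤ 2 * g St + C * ρ := by
  -- The element swapped out for `x` is the set `(b x).toFinset`, empty for the dummy `φ`.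
  have hbase : ∀ x, (b x).elim St (fun y => St.erase y) = St \ (b x).toFinset := by
    intro x
    cases b x <;> simp [sdiff_singleton_eq_erase]
  have hdisj : ((Sstar \ St : Finset U) : Set U).PairwiseDisjoint fun x => (b x).toFinset := by
    refine fun x₁ hx₁ x₂ hx₂ hne => disjoint_left.2 fun y hy₁ hy₂ => hne ?_
    rw [Option.mem_toFinset] at hy₁ hy₂
    exact hinj y (himg x₁ hx₁ y hy₁) x₁ hx₁ x₂ hx₂ hy₁ hy₂
  have hmarginal : ∀ x ∈ Sstar \ St,
      g (insert x St) - g St ≤ c x * ρ + (g St - g (St \ (b x).toFinset)) := by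
    intro x hx
    have hanti := marginal_antitone hmono hsub (sdiff_subset (s := St) (t := (b x).toFinset)) x
    linarith [hbase x ▸ hswap x hx]
  have hloss := sum_sub_sdiff_le hsub St hdisj
  have hcost : ∑ x ∈ Sstar \ St, c x * ρ ≤ C * ρ := by
    rw [← sum_mul]; exact mul_le_mul_of_nonneg_right hsum hρ
  calc g Sstar ≤ g (St ∪ Sstar \ St) := hmono _ _ (by simp [union_sdiff_self_eq_union])
    _ ≤ g St + ∑ x ∈ Sstar \ St, (g (insert x St) - g St) :=
      le_add_sum_marginal hmono hsub _ _
    _ ≤ g St + ∑ x ∈ Sstar \ St, (c x * ρ + (g St - g (St \ (b x).toFinset))) := by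
      gcongr with x hx; exact hmarginal x hx
    _ ≤ 2 * g St + C * ρ := by
      rw [sum_add_distrib]
      have hrest := hmono ∅ (St \ (Sstar \ St).biUnion fun x => (b x).toFinset) (empty_subset _)
      linarith

/-- Inequality (4) of the single-matroid greedy-swap analysis:
if every swap `(x, b x)` has marginal gain at most `c x · ρ` and
`∑_{x ∈ S* \ S_t} c x ≤ C`, then `g(S*) ≤ 2·g(S_t) + C·ρ`. -/
theorem stmt_13 {U : Type*} [Fintype U] [DecidableEq U] (g : Finset U → ℝ)
    (hmono : ∀ A B : Finset U, A ⊆ B → g A ≤ g B)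
    (hsub : ∀ A B : Finset U, g A + g B ≥ g (A ∪ B) + g (A ∩ B))
    (hempty : g ∅ = 0)
    (Sstar St : Finset U) (c : U → ℝ) (hc : ∀ u, 0 ≤ c u)
    (C : ℝ) (hC : 0 < C) (hsum : ∑ x ∈ Sstar \ St, c x ≤ C)
    (ρ : ℝ) (hρ : 0 ≤ ρ)
    (b : U → Option U)
    (himg : ∀ x ∈ Sstar \ St, ∀ y, b x = some y → y ∈ St \ Sstar)
    (hinj : ∀ y ∈ St \ Sstar, ∀ x₁ ∈ Sstar \ St, ∀ x₂ ∈ Sstar \ St,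
      b x₁ = some y → b x₂ = some y → x₁ = x₂)
    (hswap : ∀ x ∈ Sstar \ St,
      g (insert x ((b x).elim St (fun y => St.erase y))) - g St ≤ c x * ρ) :
    g Sstar ≤ 2 * g St + C * ρ :=
  stmt_13_general g hmono hsub hempty Sstar St c C hsum ρ hρ b himg hinj hswap
end

section
/- Let f be a monotone submodular function on finite U with f(∅) ≥ 0, S*, S ⊆ U, and b : S* \ S → (S \ S*) ∪ {φ} injective on preimages of real elements. If for all x ∈ S* \ S, f((S \ {b(x)}) ∪ {x}) ≤ (1 + ε/n²)·f(S), where n = |U| and ε ≥ 0, and f(S) ≥ 0, then f(S*) ≤ (2 + ε/n)·f(S). -/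
/-!
With `δ = ε/n²`, every `x ∈ S* \ S` gains at most `δ·f(S)` plus the loss `f(S) - f(S - b(x))` of
its swap partner, because by diminishing returns the gain of `x` over `S` is at most its gain over
`S - b(x)`. Summing over `S* \ S`, submodularity makes the total gain at least
`f(S ∪ S*) - f(S) ≥ f(S*) - f(S)` and, `b` being injective, the total loss at most
`f(S) - f(S \ b(S* \ S)) ≤ f(S)`. With `|S* \ S| ≤ n` this gives
`f(S*) ≤ 2 f(S) + n δ f(S)`.
-/

open Finset

section Submodular

variable {U : Type*} [DecidableEq U] {f : Finset U → ℝ}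

theorem le_add_sum_marginal_of_submodular
    (hsub : ∀ A B : Finset U, f (A ∪ B) + f (A ∩ B) ≤ f A + f B) (S T : Finset U) :
    f (S ∪ T) ≤ f S + ∑ x ∈ T, (f (insert x S) - f S) := by
  induction T using Finset.induction_on with
  | empty => simp
  | @insert a T ha ih =>
    have hunion : insert a S ∪ (S ∪ T) = S ∪ insert a T := by
      ext z; simp only [mem_insert, mem_union]; tauto
    have hinter : insert a S ∩ (S ∪ T) = S := by
      ext z; simp only [mem_insert, mem_inter, mem_union]; grind
    have := hsub (insert a S) (S ∪ T)
    rw [hunion, hinter] at this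
    rw [sum_insert ha]
    linarith

theorem marginal_le_marginal_erase_of_submodular
    (hsub : ∀ A B : Finset U, f (A ∪ B) + f (A ∩ B) ≤ f A + f B)
    {S : Finset U} {x : U} (hx : x ∉ S) (y : U) :
    f (insert x S) - f S ≤ f (insert x (S.erase y)) - f (S.erase y) := by
  have hunion : insert x (S.erase y) ∪ S = insert x S := by
    rw [insert_union, union_eq_right.mpr (erase_subset y S)]
  have hinter : insert x (S.erase y) ∩ S = S.erase y := by
    rw [insert_inter_of_notMem hx, inter_eq_left.mpr (erase_subset y S)]
  have := hsub (insert x (S.erase y)) S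
  rw [hunion, hinter] at this
  linarith

theorem sum_loss_erase_le_of_submodular
    (hsub : ∀ A B : Finset U, f (A ∪ B) + f (A ∩ B) ≤ f A + f B) (S Y : Finset U) :
    ∑ y ∈ Y, (f S - f (S.erase y)) ≤ f S - f (S \ Y) := by
  induction Y using Finset.induction_on with
  | empty => simp
  | @insert y Y hy ih =>
    have hunion : S.erase y ∪ (S \ Y) = S := by
      ext z; simp only [mem_union, mem_erase, mem_sdiff]; grind
    have hinter : S.erase y ∩ (S \ Y) = S \ insert y Y := by
      ext z; simp only [mem_inter, mem_erase, mem_sdiff, mem_insert]; tauto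
    have := hsub (S.erase y) (S \ Y)
    rw [hunion, hinter] at this
    rw [sum_insert hy]
    linarith

theorem marginal_le_of_swap_of_submodular
    (hsub : ∀ A B : Finset U, f (A ∪ B) + f (A ∩ B) ≤ f A + f B)
    {S : Finset U} {x : U} (hx : x ∉ S) (o : Option U) :
    f (insert x S) - f S ≤
      f (insert x (o.elim S fun y => S.erase y)) - f S +
        ∑ y ∈ o.toFinset, (f S - f (S.erase y)) := by
  cases o with
  | none => simp
  | some y =>
    rw [Option.elim, Option.toFinset_some, sum_singleton]
    linarith [marginal_le_marginal_erase_of_submodular hsub hx y]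

end Submodular

theorem natCast_mul_div_sq_le {k n : ℕ} (hkn : k ≤ n) {ε : ℝ} (hε : 0 ≤ ε) :
    (k : ℝ) * (ε / (n : ℝ) ^ 2) ≤ ε / n := by
  rcases Nat.eq_zero_or_pos n with rfl | hn
  · simp [Nat.le_zero.mp hkn]
  · calc (k : ℝ) * (ε / (n : ℝ) ^ 2) ≤ n * (ε / (n : ℝ) ^ 2) := by gcongr
      _ = ε / n := by field_simp

/-- Approximate local optimality (used for polynomial running time): if every
swap improves `f` by at most a factor `1 + ε/n²`, then `f(S*) ≤ (2 + ε/n)·f(S)`. -/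
theorem stmt_17 {U : Type*} [Fintype U] [DecidableEq U] (f : Finset U → ℝ)
    (hmono : ∀ A B : Finset U, A ⊆ B → f A ≤ f B)
    (hsub : ∀ A B : Finset U, f A + f B ≥ f (A ∪ B) + f (A ∩ B))
    (hempty : 0 ≤ f ∅)
    (ε : ℝ) (hε : 0 ≤ ε)
    (Sstar S : Finset U) (hfS : 0 ≤ f S) (b : U → Option U)
    (himg : ∀ x ∈ Sstar \ S, ∀ y, b x = some y → y ∈ S \ Sstar)
    (hinj : ∀ y ∈ S \ Sstar, ∀ x₁ ∈ Sstar \ S, ∀ x₂ ∈ Sstar \ S,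
      b x₁ = some y → b x₂ = some y → x₁ = x₂)
    (hswap : ∀ x ∈ Sstar \ S,
      f (insert x ((b x).elim S (fun y => S.erase y)))
        ≤ (1 + ε / (Fintype.card U : ℝ) ^ 2) * f S) :
    f Sstar ≤ (2 + ε / (Fintype.card U : ℝ)) * f S := by
  set δ := ε / (Fintype.card U : ℝ) ^ 2
  set T := Sstar \ S
  have hgain : ∀ x ∈ T,
      f (insert x S) - f S ≤ δ * f S + ∑ y ∈ (b x).toFinset, (f S - f (S.erase y)) :=
    fun x hx => by
      linarith [marginal_le_of_swap_of_submodular hsub (mem_sdiff.mp hx).2 (b x), hswap x hx]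
  have hdisj : (T : Set U).PairwiseDisjoint fun x => (b x).toFinset := by
    intro x₁ hx₁ x₂ hx₂ hne
    refine disjoint_left.mpr fun y hy₁ hy₂ => hne ?_
    rw [Option.mem_toFinset, Option.mem_def] at hy₁ hy₂
    exact hinj y (himg x₁ hx₁ y hy₁) x₁ hx₁ x₂ hx₂ hy₁ hy₂
  have hloss : ∑ x ∈ T, ∑ y ∈ (b x).toFinset, (f S - f (S.erase y)) ≤ f S := by
    rw [← sum_biUnion hdisj]
    have := sum_loss_erase_le_of_submodular hsub S (T.biUnion fun x => (b x).toFinset)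
    linarith [hmono _ (S \ T.biUnion fun x => (b x).toFinset) (empty_subset _)]
  have hcard : (T.card : ℝ) * δ ≤ ε / Fintype.card U :=
    natCast_mul_div_sq_le (card_le_univ T) hε
  calc f Sstar ≤ f (S ∪ T) :=
        hmono _ _ (by rw [union_sdiff_self_eq_union]; exact subset_union_right)
    _ ≤ f S + ∑ x ∈ T, (f (insert x S) - f S) := le_add_sum_marginal_of_submodular hsub S T
    _ ≤ f S + ∑ x ∈ T, (δ * f S + ∑ y ∈ (b x).toFinset, (f S - f (S.erase y))) := by
        gcongr with x hx; exact hgain x hx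
    _ ≤ f S + T.card * δ * f S + f S := by
        rw [sum_add_distrib, sum_const, nsmul_eq_mul]; linarith
    _ ≤ (2 + ε / Fintype.card U) * f S := by linarith [mul_le_mul_of_nonneg_right hcard hfS]
end
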